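/- arXiv:1310.5292 — 5 statements merged into one kernel-verified Lean document; each statement's English description precedes it below -/
import Mathlib

section
/- Let A be an n×n nonnegative irreducible matrix and c a positive vector. Define M_i = (1/c_i)·Σ_j a_{ij}c_j, M = max_i a_{ii}, N = max_{i≠j} a_{ij}c_j/c_i, and assume M₁ ≥ M₂ ≥ ... ≥ M_n and N > 0. Then for each 1 ≤ i ≤ n, ρ(A) ≤ (M_i + M − N + √((M_i − M + N)² + 4N·Σ_{k=1}^{i−1}(M_k − M_i)))/2. -/
/-! The bound `R` is the larger root of `(R - M_i) (R - (M - N)) = N ∑_{k<i} (M_k - M_i)`.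
With `γ = R - (M - N)`, the positive vector `x_k = c_k (1 + (M_k - M_i) / γ)` for `k < i`,
`x_k = c_k` for `k ≥ i`, satisfies `A x ≤ R x` entrywise: after scaling by `c` the diagonal
entries are at most `M` and the off-diagonal ones at most `N`. For a nonnegative matrix such a
vector bounds the modulus of every eigenvalue: comparing `|v|` for an eigenvector `v` with the
smallest multiple of `x` above it gives `|λ| ≤ R`. -/

open Matrix Finset Real

/-- Spectral radius: largest modulus of a complex eigenvalue (root of the
characteristic polynomial). -/
noncomputable def specRad {n : ℕ} (A : Matrix (Fin n) (Fin n) ℝ) : ℝ :=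
  (((A.map (Complex.ofReal)).charpoly.roots).map (fun z => ‖z‖)).foldr max 0

/-- Irreducibility of a nonnegative matrix. -/
def Irred {n : ℕ} (A : Matrix (Fin n) (Fin n) ℝ) : Prop :=
  ∀ i j : Fin n, ∃ k : ℕ, 0 < (A ^ k) i j

lemma Multiset.foldr_max_le {α : Type*} [LinearOrder α] {s : Multiset α} {b a : α}
    (hb : b ≤ a) (hs : ∀ x ∈ s, x ≤ a) : s.foldr max b ≤ a := by
  induction s using Multiset.induction with
  | empty => simpa using hb
  | cons x s ih =>
    rw [Multiset.foldr_cons]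
    exact max_le (hs x (s.mem_cons_self x)) (ih fun y hy => hs y (Multiset.mem_cons_of_mem hy))

lemma Matrix.exists_mulVec_eq_smul_of_mem_roots_charpoly {ι K : Type*} [Fintype ι]
    [DecidableEq ι] [Field K] {A : Matrix ι ι K} {μ : K} (hμ : μ ∈ A.charpoly.roots) :
    ∃ v : ι → K, v ≠ 0 ∧ A *ᵥ v = μ • v := by
  have : Module.End.HasEigenvalue (toLin' A) μ := by
    rw [Module.End.hasEigenvalue_iff_isRoot_charpoly, charpoly_toLin']
    exact (Polynomial.mem_roots A.charpoly_monic.ne_zero).1 hμ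
  obtain ⟨v, hv⟩ := this.exists_hasEigenvector
  exact ⟨v, hv.2, hv.apply_eq_smul⟩

section Nonneg

variable {ι : Type*} [Fintype ι] {A : Matrix ι ι ℝ}

lemma le_of_smul_le_mulVec_of_mulVec_le (hA : ∀ i j, 0 ≤ A i j) {x w : ι → ℝ}
    (hx : ∀ k, 0 < x k) (hw : ∀ k, 0 ≤ w k) (hw0 : w ≠ 0) {σ R : ℝ}
    (hAw : ∀ k, σ * w k ≤ (A *ᵥ w) k) (hAx : ∀ k, (A *ᵥ x) k ≤ R * x k) : σ ≤ R := by
  obtain ⟨k₀, hk₀⟩ := Function.ne_iff.1 hw0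
  -- Compare `w` with the multiple of `x` that touches it at a coordinate of maximal ratio.
  obtain ⟨j, -, hj⟩ := exists_max_image univ (fun k => w k / x k) ⟨k₀, mem_univ _⟩
  set u := w j / x j
  have hwu : ∀ k, w k ≤ u * x k := fun k => (div_le_iff₀ (hx k)).1 (hj k (mem_univ k))
  have hwj : w j = u * x j := (div_mul_cancel₀ _ (hx j).ne').symm
  have hu : 0 < u := (div_pos ((hw k₀).lt_of_ne' hk₀) (hx k₀)).trans_le (hj k₀ (mem_univ _))
  have key : σ * w j ≤ R * w j :=
    calc σ * w j ≤ (A *ᵥ w) j := hAw j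
      _ ≤ (A *ᵥ (u • x)) j :=
        sum_le_sum fun l _ => mul_le_mul_of_nonneg_left (hwu l) (hA j l)
      _ = u * (A *ᵥ x) j := by rw [mulVec_smul, Pi.smul_apply, smul_eq_mul]
      _ ≤ u * (R * x j) := mul_le_mul_of_nonneg_left (hAx j) hu.le
      _ = R * w j := by rw [hwj]; ring
  exact le_of_mul_le_mul_right key (hwj ▸ mul_pos hu (hx j))

lemma norm_le_of_mulVec_eq_smul (hA : ∀ i j, 0 ≤ A i j) {x : ι → ℝ} (hx : ∀ k, 0 < x k)
    {R : ℝ} (hAx : ∀ k, (A *ᵥ x) k ≤ R * x k) {z : ℂ} {v : ι → ℂ} (hv0 : v ≠ 0)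
    (hv : A.map Complex.ofReal *ᵥ v = z • v) : ‖z‖ ≤ R := by
  refine le_of_smul_le_mulVec_of_mulVec_le hA hx (w := fun j => ‖v j‖) (fun _ => norm_nonneg _)
    (fun h => hv0 (funext fun j => norm_eq_zero.1 (congrFun h j))) (fun k => ?_) hAx
  calc ‖z‖ * ‖v k‖ = ‖∑ j, (A k j : ℂ) * v j‖ := by
        rw [← norm_mul, ← smul_eq_mul, ← Pi.smul_apply, ← hv]; rfl
    _ ≤ ∑ j, ‖(A k j : ℂ) * v j‖ := norm_sum_le _ _
    _ = ∑ j, A k j * ‖v j‖ := by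
        simp only [norm_mul, Complex.norm_real, Real.norm_of_nonneg (hA k _)]

end Nonneg

lemma specRad_le_of_mulVec_le {n : ℕ} {A : Matrix (Fin n) (Fin n) ℝ} (hA : ∀ i j, 0 ≤ A i j)
    {x : Fin n → ℝ} (hx : ∀ k, 0 < x k) {R : ℝ} (hR : 0 ≤ R)
    (hAx : ∀ k, (A *ᵥ x) k ≤ R * x k) : specRad A ≤ R := by
  refine Multiset.foldr_max_le hR fun r hr => ?_
  obtain ⟨z, hz, rfl⟩ := Multiset.mem_map.1 hr
  obtain ⟨v, hv0, hv⟩ := exists_mulVec_eq_smul_of_mem_roots_charpoly hz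
  exact norm_le_of_mulVec_eq_smul hA hx hAx hv0 hv

lemma quadratic_larger_root_spec (a b t : ℝ) (ht : 0 ≤ t) :
    a ≤ (a + b + √((a - b) ^ 2 + 4 * t)) / 2 ∧ b ≤ (a + b + √((a - b) ^ 2 + 4 * t)) / 2 ∧
      ((a + b + √((a - b) ^ 2 + 4 * t)) / 2 - a) * ((a + b + √((a - b) ^ 2 + 4 * t)) / 2 - b)
        = t := by
  have hD : 0 ≤ (a - b) ^ 2 + 4 * t := by positivity
  have habs : |a - b| ≤ √((a - b) ^ 2 + 4 * t) := by
    rw [← sqrt_sq_eq_abs]; exact sqrt_le_sqrt (by linarith)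
  refine ⟨?_, ?_, ?_⟩
  · linarith [le_abs_self (a - b)]
  · linarith [neg_abs_le (a - b)]
  · linear_combination (1 / 4 : ℝ) * sq_sqrt hD

section Weighted

variable {ι : Type*} [Fintype ι] [DecidableEq ι] {A : Matrix ι ι ℝ} {c e : ι → ℝ} {M N : ℝ}

lemma sum_mul_mul_le_of_diag_le_of_offDiag_le (k : ι) (hc : 0 ≤ c k) (he : ∀ j, 0 ≤ e j)
    (hM : A k k ≤ M) (hN : ∀ j, k ≠ j → A k j * c j ≤ N * c k) :
    ∑ j, A k j * c j * e j ≤ c k * ((M - N) * e k + N * ∑ j, e j) := by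
  rw [← add_sum_erase _ _ (mem_univ k), ← add_sum_erase _ _ (mem_univ k)]
  have hoff : ∑ j ∈ univ.erase k, A k j * c j * e j ≤ ∑ j ∈ univ.erase k, N * c k * e j :=
    sum_le_sum fun j hj => mul_le_mul_of_nonneg_right (hN j (ne_of_mem_erase hj).symm) (he j)
  have hdiag : A k k * c k * e k ≤ M * c k * e k := by gcongr; exact he k
  rw [← mul_sum] at hoff
  nlinarith

lemma mulVec_mul_one_add_le (hc : ∀ k, 0 ≤ c k) (he : ∀ j, 0 ≤ e j) (hM : ∀ k, A k k ≤ M)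
    (hN : ∀ k j, k ≠ j → A k j * c j ≤ N * c k) {r : ι → ℝ}
    (hr : ∀ k, ∑ j, A k j * c j = c k * r k) {R : ℝ}
    (hrow : ∀ k, r k + (M - N) * e k + N * ∑ j, e j ≤ R * (1 + e k)) (k : ι) :
    (A *ᵥ fun j => c j * (1 + e j)) k ≤ R * (c k * (1 + e k)) := by
  have hsplit : (A *ᵥ fun j => c j * (1 + e j)) k = c k * r k + ∑ j, A k j * c j * e j := by
    simp only [mulVec, dotProduct, ← hr k, ← sum_add_distrib]
    exact sum_congr rfl fun j _ => by ring
  rw [hsplit]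
  nlinarith [sum_mul_mul_le_of_diag_le_of_offDiag_le k (hc k) he (hM k) (hN k), hrow k, hc k]

end Weighted

lemma exists_nonneg_sum_le_and_le_mul {ι : Type*} [Fintype ι] (s : Finset ι) (d : ι → ℝ)
    (hs : ∀ k ∈ s, 0 ≤ d k) (hsc : ∀ k ∉ s, d k ≤ 0) {N γ δ : ℝ} (hN : 0 < N) (hγ : 0 ≤ γ)
    (hδ : 0 ≤ δ) (h : γ * δ = N * ∑ k ∈ s, d k) :
    ∃ e : ι → ℝ, (∀ k, 0 ≤ e k) ∧ N * ∑ k, e k ≤ δ ∧ ∀ k, d k ≤ γ * e k := by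
  rcases hγ.eq_or_lt with rfl | hγ
  · have hd : ∀ k ∈ s, d k = 0 := (sum_eq_zero_iff_of_nonneg hs).1 <| by
      simpa [hN.ne'] using h.symm
    refine ⟨0, fun _ => le_rfl, by simpa using hδ, fun k => ?_⟩
    by_cases hk : k ∈ s
    · simp [hd k hk]
    · simpa using hsc k hk
  · classical
    refine ⟨fun k => if k ∈ s then d k / γ else 0, fun k => ?_, ?_, fun k => ?_⟩
    · dsimp only
      split_ifs with hk
      · exact div_nonneg (hs k hk) hγ.le
      · exact le_rfl
    · rw [sum_ite_mem, univ_inter, ← sum_div, mul_div_assoc', ← h, mul_div_cancel_left₀ _ hγ.ne']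
    · dsimp only
      split_ifs with hk
      · rw [mul_div_cancel₀ _ hγ.ne']
      · simpa using hsc k hk

theorem stmt_1_general {n : ℕ} (A : Matrix (Fin n) (Fin n) ℝ)
    (hA : ∀ i j, 0 ≤ A i j)
    (c : Fin n → ℝ) (hc : ∀ i, 0 < c i)
    (Mv : Fin n → ℝ) (hMv : ∀ i, Mv i = (1 / c i) * ∑ j, A i j * c j)
    (M : ℝ) (hM : IsGreatest {x | ∃ i, x = A i i} M)
    (N : ℝ) (hN : IsGreatest {x | ∃ i j, i ≠ j ∧ x = A i j * c j / c i} N)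
    (hord : ∀ i j : Fin n, i ≤ j → Mv j ≤ Mv i) (hNpos : 0 < N) :
    ∀ i : Fin n, specRad A ≤
      (Mv i + M - N +
        Real.sqrt ((Mv i - M + N) ^ 2 + 4 * N * ∑ k ∈ Finset.Iio i, (Mv k - Mv i))) / 2 := by
  intro i
  have hr : ∀ k, ∑ j, A k j * c j = c k * Mv k := fun k => by
    rw [hMv k, one_div, mul_inv_cancel_left₀ (hc k).ne']
  have hNc : ∀ k j, k ≠ j → A k j * c j ≤ N * c k := fun k j hkj =>
    (div_le_iff₀ (hc k)).1 (hN.2 ⟨k, j, hkj, rfl⟩)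
  have hS : ∀ k ∈ Iio i, 0 ≤ Mv k - Mv i := fun k hk => sub_nonneg.2 (hord k i (mem_Iio.1 hk).le)
  have hSc : ∀ k ∉ Iio i, Mv k - Mv i ≤ 0 := fun k hk =>
    sub_nonpos.2 (hord i k (not_lt.1 (mem_Iio.not.1 hk)))
  obtain ⟨hRi, hRMN, hkey⟩ := quadratic_larger_root_spec (Mv i) (M - N)
    (N * ∑ k ∈ Iio i, (Mv k - Mv i)) (mul_nonneg hNpos.le (sum_nonneg hS))
  rw [show Mv i + M - N = Mv i + (M - N) by ring, show Mv i - M + N = Mv i - (M - N) by ring,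
    mul_assoc 4 N]
  obtain ⟨e, he, hNe, hde⟩ := exists_nonneg_sum_le_and_le_mul (Iio i) (fun k => Mv k - Mv i)
    hS hSc hNpos (sub_nonneg.2 hRMN) (sub_nonneg.2 hRi) (by rw [mul_comm, hkey])
  have hMv0 : 0 ≤ Mv i := (mul_nonneg_iff_of_pos_left (hc i)).1
    (hr i ▸ sum_nonneg fun j _ => mul_nonneg (hA i j) (hc j).le)
  refine specRad_le_of_mulVec_le hA (x := fun j => c j * (1 + e j))
    (fun k => mul_pos (hc k) (by linarith [he k])) (hMv0.trans hRi)
    (mulVec_mul_one_add_le (fun k => (hc k).le) he (fun k => hM.2 ⟨k, rfl⟩) hNc hr fun k => ?_)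
  linarith [hde k]

theorem stmt_1 {n : ℕ} (A : Matrix (Fin n) (Fin n) ℝ)
    (hA : ∀ i j, 0 ≤ A i j) (hirr : Irred A)
    (c : Fin n → ℝ) (hc : ∀ i, 0 < c i)
    (Mv : Fin n → ℝ) (hMv : ∀ i, Mv i = (1 / c i) * ∑ j, A i j * c j)
    (M : ℝ) (hM : IsGreatest {x | ∃ i, x = A i i} M)
    (N : ℝ) (hN : IsGreatest {x | ∃ i j, i ≠ j ∧ x = A i j * c j / c i} N)
    (hord : ∀ i j : Fin n, i ≤ j → Mv j ≤ Mv i) (hNpos : 0 < N) :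
    ∀ i : Fin n, specRad A ≤
      (Mv i + M - N +
        Real.sqrt ((Mv i - M + N) ^ 2 + 4 * N * ∑ k ∈ Finset.Iio i, (Mv k - Mv i))) / 2 :=
  stmt_1_general A hA c hc Mv hMv M hM N hN hord hNpos
end

section
/- Let A be an n×n nonnegative irreducible matrix and c a positive vector. Define M_i = (1/c_i)·Σ_j a_{ij}c_j, S = min_i a_{ii}, T = min_{i≠j} a_{ij}c_j/c_i, and assume M₁ ≥ M₂ ≥ ... ≥ M_n. Then ρ(A) ≥ (M_n + S − T + √((M_n − S + T)² + 4T·Σ_{k=1}^{n−1}(M_k − M_n)))/2. -/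
open Matrix Finset Real

/-!
A nonnegative vector `y ≠ 0` with `r • y ≤ A *ᵥ y` forces `r ≤ ρ(A)` (Collatz–Wielandt): iterating
gives `r ^ k ≤ ‖A ^ k‖` in the ∞-operator norm, and Gelfand's formula turns this into a bound on the
spectral radius. The claimed bound `r` is the larger root of
`(r - M_n) (r - (S - T)) = T ∑ₖ (M_k - M_n)`, which is exactly what makes the test vector
`y_j = c_j (r - (S - T) + M_j - M_n)` satisfy `r • y ≤ A *ᵥ y` once the diagonal entries are bounded
below by `S` and the off-diagonal ones by `T c_i / c_j`. When `r ≤ S - T` that vector may fail to be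
positive, but then `r ≤ S ≤ ρ(A)` directly.
-/
lemma Multiset.foldr_max_zero_nonneg (s : Multiset ℝ) : 0 ≤ s.foldr max 0 :=
  Multiset.induction_on s le_rfl fun a t ih => by
    rw [Multiset.foldr_cons]; exact le_max_of_le_right ih

lemma Multiset.le_foldr_max_zero {s : Multiset ℝ} {a : ℝ} (ha : a ∈ s) : a ≤ s.foldr max 0 := by
  induction s using Multiset.induction_on with
  | empty => simp at ha
  | cons b t ih =>
    rw [Multiset.foldr_cons]
    rcases Multiset.mem_cons.mp ha with rfl | h
    · exact le_max_left _ _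
    · exact le_max_of_le_right (ih h)

lemma specRad_nonneg {n : ℕ} (A : Matrix (Fin n) (Fin n) ℝ) : 0 ≤ specRad A :=
  Multiset.foldr_max_zero_nonneg _

lemma spectralRadius_map_ofReal_le_specRad {n : ℕ} (A : Matrix (Fin n) (Fin n) ℝ) :
    spectralRadius ℂ (A.map Complex.ofReal) ≤ ENNReal.ofReal (specRad A) := by
  refine iSup₂_le fun z hz => ?_
  rw [← ENNReal.ofReal_coe_nnreal, coe_nnnorm]
  refine ENNReal.ofReal_le_ofReal (Multiset.le_foldr_max_zero (Multiset.mem_map_of_mem _ ?_))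
  exact Polynomial.mem_roots'.mpr
    ⟨(charpoly_monic _).ne_zero, mem_spectrum_iff_isRoot_charpoly.mp hz⟩

theorem spectrum.ofReal_le_spectralRadius_of_pow_le_norm_pow {A : Type*} [NormedRing A]
    [NormedAlgebra ℂ A] [CompleteSpace A] {a : A} {r : ℝ} (h : ∀ k : ℕ, r ^ k ≤ ‖a ^ k‖) :
    ENNReal.ofReal r ≤ spectralRadius ℂ a := by
  rcases lt_or_ge r 0 with hr | hr
  · simp [ENNReal.ofReal_of_nonpos hr.le]
  refine ge_of_tendsto (spectrum.pow_norm_pow_one_div_tendsto_nhds_spectralRadius a) ?_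
  filter_upwards [Filter.eventually_ne_atTop 0] with k hk
  refine ENNReal.ofReal_le_ofReal ?_
  calc r = (r ^ k) ^ (1 / (k : ℝ)) := by rw [one_div, pow_rpow_inv_natCast hr hk]
    _ ≤ ‖a ^ k‖ ^ (1 / (k : ℝ)) := by gcongr; exact h k

lemma Matrix.mulVec_mono_of_nonneg {ι : Type*} [Fintype ι] {A : Matrix ι ι ℝ}
    (hA : ∀ i j, 0 ≤ A i j) {u v : ι → ℝ} (huv : u ≤ v) : A *ᵥ u ≤ A *ᵥ v := fun i =>
  Finset.sum_le_sum fun j _ => mul_le_mul_of_nonneg_left (huv j) (hA i j)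

lemma Matrix.pow_smul_le_pow_mulVec {ι : Type*} [Fintype ι] [DecidableEq ι] {A : Matrix ι ι ℝ}
    (hA : ∀ i j, 0 ≤ A i j) {r : ℝ} (hr : 0 ≤ r) {y : ι → ℝ} (h : r • y ≤ A *ᵥ y) (k : ℕ) :
    r ^ k • y ≤ (A ^ k) *ᵥ y := by
  induction k with
  | zero => simp
  | succ k ih =>
    calc r ^ (k + 1) • y = r ^ k • (r • y) := by rw [pow_succ, mul_smul]
      _ ≤ r ^ k • (A *ᵥ y) := smul_le_smul_of_nonneg_left h (pow_nonneg hr k)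
      _ = A *ᵥ (r ^ k • y) := (mulVec_smul A _ y).symm
      _ ≤ A *ᵥ ((A ^ k) *ᵥ y) := mulVec_mono_of_nonneg hA ih
      _ = (A ^ (k + 1)) *ᵥ y := by rw [mulVec_mulVec, pow_succ']

section linftyNorm

attribute [local instance] Matrix.linftyOpNormedAddCommGroup Matrix.linftyOpNormedRing
  Matrix.linftyOpNormedAlgebra

lemma Matrix.le_linfty_opNorm_of_smul_le_mulVec {ι : Type*} [Fintype ι] {B : Matrix ι ι ℝ}
    {s : ℝ} (hs : 0 ≤ s) {y : ι → ℝ} (hy : 0 ≤ y) (hy0 : y ≠ 0) (h : s • y ≤ B *ᵥ y) :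
    s ≤ ‖B‖ := by
  have hnorm : s * ‖y‖ ≤ ‖B *ᵥ y‖ := by
    rw [← Real.norm_of_nonneg hs, ← norm_smul]
    refine (pi_norm_le_iff_of_nonneg (norm_nonneg _)).mpr fun i => ?_
    have hi : 0 ≤ (s • y) i := mul_nonneg hs (hy i)
    rw [Real.norm_of_nonneg hi]
    exact (h i).trans ((le_abs_self _).trans (norm_le_pi_norm (B *ᵥ y) i))
  exact le_of_mul_le_mul_right (hnorm.trans (linfty_opNorm_mulVec B y)) (norm_pos_iff.mpr hy0)

lemma Matrix.linfty_opNorm_map_ofReal {ι : Type*} [Fintype ι] (B : Matrix ι ι ℝ) :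
    ‖B.map Complex.ofReal‖ = ‖B‖ := by
  simp only [linfty_opNorm_def, map_apply, Complex.nnnorm_real]

theorem le_specRad_of_smul_le_mulVec {n : ℕ} {A : Matrix (Fin n) (Fin n) ℝ}
    (hA : ∀ i j, 0 ≤ A i j) {r : ℝ} {y : Fin n → ℝ} (hy : 0 ≤ y) (hy0 : y ≠ 0)
    (h : r • y ≤ A *ᵥ y) : r ≤ specRad A := by
  rcases lt_or_ge r 0 with hr | hr
  · exact hr.le.trans (specRad_nonneg A)
  have : CompleteSpace (Matrix (Fin n) (Fin n) ℂ) := FiniteDimensional.complete ℂ _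
  have hgrowth : ∀ k : ℕ, r ^ k ≤ ‖A.map Complex.ofReal ^ k‖ := fun k => by
    have hpow : A.map Complex.ofReal ^ k = (A ^ k).map Complex.ofReal :=
      (A.map_pow Complex.ofRealHom k).symm
    rw [hpow, linfty_opNorm_map_ofReal]
    exact le_linfty_opNorm_of_smul_le_mulVec (pow_nonneg hr k) hy hy0
      (pow_smul_le_pow_mulVec hA hr h k)
  rw [← ENNReal.ofReal_le_ofReal_iff (specRad_nonneg A)]
  exact (spectrum.ofReal_le_spectralRadius_of_pow_le_norm_pow hgrowth).trans
    (spectralRadius_map_ofReal_le_specRad A)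

end linftyNorm

lemma diag_le_specRad {n : ℕ} {A : Matrix (Fin n) (Fin n) ℝ} (hA : ∀ i j, 0 ≤ A i j)
    (i : Fin n) : A i i ≤ specRad A := by
  refine le_specRad_of_smul_le_mulVec hA (y := Pi.single i 1) ?_ ?_ fun k => ?_
  · exact Pi.single_nonneg.mpr zero_le_one
  · simp
  · rw [mulVec_single_one]
    rcases eq_or_ne k i with rfl | hk
    · simp
    · simpa [hk] using hA k i

lemma smul_le_mulVec_of_sub_mul_sub_eq {ι : Type*} [Fintype ι] [DecidableEq ι]
    {A : Matrix ι ι ℝ} {c M : ι → ℝ} {m S T r : ℝ} (hc : 0 ≤ c)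
    (hrow : ∀ i, ∑ j, A i j * c j = c i * M i) (hm : ∀ i, m ≤ M i)
    (hS : ∀ i, S ≤ A i i) (hT : ∀ i j, i ≠ j → T * c i ≤ A i j * c j)
    (hr : (r - m) * (r - (S - T)) = T * ∑ j, (M j - m)) :
    r • (fun j => c j * (r - (S - T) + (M j - m))) ≤
      A *ᵥ fun j => c j * (r - (S - T) + (M j - m)) := by
  intro i
  have hmulVec : (A *ᵥ fun j => c j * (r - (S - T) + (M j - m))) i =
      (r - (S - T)) * (c i * M i) + ∑ j, A i j * c j * (M j - m) := by
    simp only [mulVec, dotProduct]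
    rw [← hrow i, mul_sum, ← sum_add_distrib]
    exact sum_congr rfl fun j _ => by ring
  have hdiag : S * c i * (M i - m) ≤ A i i * c i * (M i - m) := by
    have hci := hc i
    have hMi := hm i
    gcongr
    exact hS i
  have hoff : T * c i * (∑ j, (M j - m) - (M i - m)) ≤
      ∑ j ∈ univ.erase i, A i j * c j * (M j - m) := by
    rw [← sum_erase_eq_sub (mem_univ i), mul_sum]
    exact sum_le_sum fun j hj =>
      mul_le_mul_of_nonneg_right (hT i j (ne_of_mem_erase hj).symm) (sub_nonneg.2 (hm j))
  calc (r • fun j => c j * (r - (S - T) + (M j - m))) i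
      = (r - (S - T)) * (c i * M i) +
          (S * c i * (M i - m) + T * c i * (∑ j, (M j - m) - (M i - m))) := by
        simp only [Pi.smul_apply, smul_eq_mul]
        linear_combination c i * hr
    _ ≤ (r - (S - T)) * (c i * M i) +
          (A i i * c i * (M i - m) + ∑ j ∈ univ.erase i, A i j * c j * (M j - m)) := by
        linarith
    _ = (A *ᵥ fun j => c j * (r - (S - T) + (M j - m))) i := by
        rw [hmulVec, ← add_sum_erase _ _ (mem_univ i)]

theorem stmt_2 {n : ℕ} (hn : 0 < n) (A : Matrix (Fin n) (Fin n) ℝ)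
    (hA : ∀ i j, 0 ≤ A i j)
    (c : Fin n → ℝ) (hc : ∀ i, 0 < c i)
    (Mv : Fin n → ℝ) (hMv : ∀ i, Mv i = (1 / c i) * ∑ j, A i j * c j)
    (S : ℝ) (hS : IsLeast {x | ∃ i, x = A i i} S)
    (T : ℝ) (hT : IsLeast {x | ∃ i j, i ≠ j ∧ x = A i j * c j / c i} T)
    (hord : ∀ i j : Fin n, i ≤ j → Mv j ≤ Mv i) :
    specRad A ≥
      (Mv ⟨n - 1, by omega⟩ + S - T +
        Real.sqrt ((Mv ⟨n - 1, by omega⟩ - S + T) ^ 2 +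
          4 * T * ∑ k ∈ Finset.Iio (⟨n - 1, by omega⟩ : Fin n),
            (Mv k - Mv ⟨n - 1, by omega⟩))) / 2 := by
  set N : Fin n := ⟨n - 1, by omega⟩
  have hle : ∀ i, i ≤ N := fun i => Fin.le_def.mpr (by have := i.isLt; simp only [N]; omega)
  have hmin : ∀ i, Mv N ≤ Mv i := fun i => hord i N (hle i)
  have hIio : ∑ k ∈ Iio N, (Mv k - Mv N) = ∑ k, (Mv k - Mv N) :=
    sum_subset (subset_univ _) fun k _ hk => by
      rw [le_antisymm (hle k) (not_lt.mp (by simpa using hk)), sub_self]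
  rw [hIio, ge_iff_le]
  obtain ⟨i₀, hSi₀⟩ := hS.1
  have hT0 : 0 ≤ T := by
    obtain ⟨i, j, -, rfl⟩ := hT.1
    exact div_nonneg (mul_nonneg (hA i j) (hc j).le) (hc i).le
  have hTle : ∀ i j, i ≠ j → T * c i ≤ A i j * c j := fun i j hij =>
    (le_div_iff₀ (hc i)).mp (hT.2 ⟨i, j, hij, rfl⟩)
  have hrow : ∀ i, ∑ j, A i j * c j = c i * Mv i := fun i => by
    rw [hMv i]; field_simp [(hc i).ne']
  set excess := ∑ k, (Mv k - Mv N)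
  have hexcess : 0 ≤ excess := sum_nonneg fun k _ => sub_nonneg.2 (hmin k)
  set r := (Mv N + S - T + √((Mv N - S + T) ^ 2 + 4 * T * excess)) / 2
  have hquad : (r - Mv N) * (r - (S - T)) = T * excess := by
    have hdisc : 0 ≤ (Mv N - S + T) ^ 2 + 4 * T * excess := by positivity
    linear_combination (1 / 4 : ℝ) * Real.sq_sqrt hdisc
  rcases le_or_gt r (S - T) with hrS | hrS
  · calc r ≤ A i₀ i₀ := by linarith
      _ ≤ specRad A := diag_le_specRad hA i₀
  · have hy : ∀ j, 0 < c j * (r - (S - T) + (Mv j - Mv N)) := fun j =>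
      mul_pos (hc j) (by linarith [hmin j])
    exact le_specRad_of_smul_le_mulVec hA (fun j => (hy j).le)
      (Function.ne_iff.mpr ⟨⟨0, hn⟩, (hy _).ne'⟩)
      (smul_le_mulVec_of_sub_mul_sub_eq (fun i => (hc i).le) hrow hmin (fun i => hS.2 ⟨i, rfl⟩)
        hTle hquad)
end

section
/- Let A be an n×n nonnegative irreducible matrix with zero diagonal and row sums r₁ ≥ r₂ ≥ ... ≥ r_n, and let N = max_{i≠j} a_{ij} > 0. Then for each 1 ≤ i ≤ n, ρ(A) ≤ (r_i − N + √((r_i + N)² + 4N·Σ_{k=1}^{i−1}(r_k − r_i)))/2. -/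
open Matrix Finset Real

/-!
Let `t` be the right-hand side and `S = ∑_{k<i} (r_k - r_i)`, so that `t` is the larger root of
`t (t - r_i + N) = N (r_i + S)`. For the positive vector `u_k = r_k + (t - r_i + N)` one checks,
row by row, `A u ≤ t u`: the off-diagonal entries are at most `N`, and `r_j - r_i` is positive
only for `j < i`. A positive vector with `A u ≤ t u` bounds every eigenvalue of the nonnegative
matrix `A` by `t`: compare an eigenvector `v` with `u` at an index maximising `|v_k| / u_k`.
-/

theorem Multiset.foldr_max_le_s4 {s : Multiset ℝ} {t : ℝ} (h0 : 0 ≤ t) (h : ∀ x ∈ s, x ≤ t) :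
    s.foldr max 0 ≤ t := by
  induction s using Multiset.induction_on with
  | empty => simpa using h0
  | cons a s ih =>
    rw [Multiset.foldr_cons]
    exact max_le (h a (Multiset.mem_cons_self a s)) (ih fun x hx => h x (Multiset.mem_cons_of_mem hx))

theorem Matrix.exists_mulVec_eq_smul_of_isRoot_charpoly {ι K : Type*} [Fintype ι] [DecidableEq ι]
    [Field K] {M : Matrix ι ι K} {μ : K} (h : M.charpoly.IsRoot μ) :
    ∃ v ≠ 0, M *ᵥ v = μ • v := by
  rw [← Matrix.charpoly_toLin', ← Module.End.hasEigenvalue_iff_isRoot_charpoly] at h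
  obtain ⟨v, hv⟩ := h.exists_hasEigenvector
  exact ⟨v, hv.2, hv.apply_eq_smul⟩

theorem norm_le_of_mulVec_eq_smul_of_mulVec_le {ι : Type*} [Fintype ι] {A : Matrix ι ι ℝ}
    (hA : ∀ i j, 0 ≤ A i j) {u : ι → ℝ} (hu : ∀ i, 0 < u i) {t : ℝ} (hAu : A *ᵥ u ≤ t • u)
    {v : ι → ℂ} (hv0 : v ≠ 0) {μ : ℂ} (hv : A.map Complex.ofReal *ᵥ v = μ • v) : ‖μ‖ ≤ t := by
  obtain ⟨j₀, hj₀⟩ := Function.ne_iff.mp hv0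
  obtain ⟨k, -, hk⟩ := Finset.exists_max_image univ (fun j => ‖v j‖ / u j) ⟨j₀, mem_univ j₀⟩
  set c := ‖v k‖ / u k
  have hvu : ∀ j, ‖v j‖ ≤ c * u j := fun j =>
    (div_le_iff₀ (hu j)).mp (hk j (mem_univ j))
  have hc : 0 < c := (div_pos (norm_pos_iff.mpr hj₀) (hu j₀)).trans_le (hk j₀ (mem_univ j₀))
  have hvk : ‖v k‖ = c * u k := (div_mul_cancel₀ _ (hu k).ne').symm
  have hrow : ‖μ‖ * ‖v k‖ ≤ ∑ j, A k j * ‖v j‖ := by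
    calc ‖μ‖ * ‖v k‖ = ‖∑ j, (A k j : ℂ) * v j‖ := by
          rw [← norm_mul, ← smul_eq_mul, ← Pi.smul_apply, ← hv]; rfl
      _ ≤ ∑ j, ‖(A k j : ℂ) * v j‖ := norm_sum_le _ _
      _ = ∑ j, A k j * ‖v j‖ := by
          simp only [norm_mul, Complex.norm_real, Real.norm_of_nonneg (hA k _)]
  have hAuk : ∑ j, A k j * u j ≤ t * u k := hAu k
  have : ‖μ‖ * ‖v k‖ ≤ t * ‖v k‖ :=
    calc ‖μ‖ * ‖v k‖ ≤ ∑ j, A k j * ‖v j‖ := hrow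
      _ ≤ ∑ j, A k j * (c * u j) := by gcongr with j; exacts [hA k j, hvu j]
      _ = c * ∑ j, A k j * u j := by rw [mul_sum]; exact sum_congr rfl fun j _ => by ring
      _ ≤ c * (t * u k) := by gcongr
      _ = t * ‖v k‖ := by rw [hvk]; ring
  exact le_of_mul_le_mul_right this (hvk ▸ mul_pos hc (hu k))

theorem specRad_le_of_mulVec_le_s4 {n : ℕ} {A : Matrix (Fin n) (Fin n) ℝ} (hA : ∀ i j, 0 ≤ A i j)
    {u : Fin n → ℝ} (hu : ∀ i, 0 < u i) {t : ℝ} (ht : 0 ≤ t) (hAu : A *ᵥ u ≤ t • u) :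
    specRad A ≤ t := by
  refine Multiset.foldr_max_le_s4 ht fun x hx => ?_
  obtain ⟨μ, hμ, rfl⟩ := Multiset.mem_map.mp hx
  obtain ⟨v, hv0, hv⟩ :=
    Matrix.exists_mulVec_eq_smul_of_isRoot_charpoly (Polynomial.mem_roots'.mp hμ).2
  exact norm_le_of_mulVec_eq_smul_of_mulVec_le hA hu hAu hv0 hv

theorem mulVec_le_of_offDiag_le {ι : Type*} [Fintype ι] [DecidableEq ι] {A : Matrix ι ι ℝ}
    (hA : ∀ i j, 0 ≤ A i j) (hdiag : ∀ i, A i i = 0) {N : ℝ} (hN0 : 0 ≤ N)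
    (hN : ∀ i j, i ≠ j → A i j ≤ N) {r : ι → ℝ} (hr : ∀ i, r i = ∑ j, A i j) {c t : ℝ}
    (ht : t * (t - c + N) = N * (c + ∑ j, max (r j - c) 0)) :
    A *ᵥ (fun j => r j + (t - c + N)) ≤ t • fun j => r j + (t - c + N) := by
  intro k
  set m := fun j => max (r j - c) 0
  have hsplit : ∑ j, A k j * (r j + (t - c + N)) = ∑ j, A k j * (r j - c) + (t + N) * r k := by
    simp only [hr k, mul_sum, ← sum_add_distrib]
    exact sum_congr rfl fun j _ => by ring
  have hoff : ∑ j, A k j * (r j - c) ≤ N * (∑ j, m j - m k) :=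
    calc ∑ j, A k j * (r j - c) = ∑ j ∈ univ.erase k, A k j * (r j - c) := by
          rw [← add_sum_erase _ _ (mem_univ k), hdiag, zero_mul, zero_add]
      _ ≤ ∑ j ∈ univ.erase k, N * m j := sum_le_sum fun j hj =>
          (mul_le_mul_of_nonneg_left (le_max_left _ _) (hA k j)).trans
            (mul_le_mul_of_nonneg_right (hN k j (ne_of_mem_erase hj).symm) (le_max_right _ _))
      _ = N * (∑ j, m j - m k) := by rw [← mul_sum, sum_erase_eq_sub (mem_univ k)]
  have hmk : N * (r k - c) ≤ N * m k := mul_le_mul_of_nonneg_left (le_max_left _ _) hN0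
  change ∑ j, A k j * (r j + (t - c + N)) ≤ t * (r k + (t - c + N))
  linear_combination hsplit + hoff + hmk - ht

theorem sum_Iio_sub_eq_sum_max_zero {ι : Type*} [Fintype ι] [LinearOrder ι]
    [LocallyFiniteOrderBot ι] {r : ι → ℝ} (hr : Antitone r) (i : ι) :
    ∑ k ∈ Iio i, (r k - r i) = ∑ k, max (r k - r i) 0 :=
  calc ∑ k ∈ Iio i, (r k - r i) = ∑ k ∈ Iio i, max (r k - r i) 0 :=
        sum_congr rfl fun _ hk => (max_eq_left (sub_nonneg.2 (hr (mem_Iio.1 hk).le))).symm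
    _ = ∑ k, max (r k - r i) 0 := sum_subset (subset_univ _) fun _ _ hk =>
        max_eq_right (sub_nonpos.2 (hr (not_lt.1 (mt mem_Iio.2 hk))))

theorem half_add_sqrt_mul_eq {c N S : ℝ} (hD : 0 ≤ (c + N) ^ 2 + 4 * N * S) :
    (c - N + √((c + N) ^ 2 + 4 * N * S)) / 2 * ((c - N + √((c + N) ^ 2 + 4 * N * S)) / 2 - c + N)
      = N * (c + S) := by
  linear_combination Real.sq_sqrt hD / 4

theorem stmt_4_general {n : ℕ} (A : Matrix (Fin n) (Fin n) ℝ)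
    (hA : ∀ i j, 0 ≤ A i j) (hdiag : ∀ i, A i i = 0)
    (r : Fin n → ℝ) (hr : ∀ i, r i = ∑ j, A i j)
    (N : ℝ) (hN : IsGreatest {x | ∃ i j, i ≠ j ∧ x = A i j} N)
    (hord : ∀ i j : Fin n, i ≤ j → r j ≤ r i) (hNpos : 0 < N) :
    ∀ i : Fin n, specRad A ≤
      (r i - N +
        Real.sqrt ((r i + N) ^ 2 + 4 * N * ∑ k ∈ Finset.Iio i, (r k - r i))) / 2 := by
  intro i
  have hr0 : ∀ k, 0 ≤ r k := fun k => hr k ▸ sum_nonneg fun j _ => hA k j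
  have hS : ∑ k ∈ Iio i, (r k - r i) = ∑ k, max (r k - r i) 0 :=
    sum_Iio_sub_eq_sum_max_zero (fun a b h => hord a b h) i
  set S := ∑ k ∈ Iio i, (r k - r i)
  have hS0 : 0 ≤ S := hS ▸ sum_nonneg fun k _ => le_max_right _ _
  have hD : 0 ≤ (r i + N) ^ 2 + 4 * N * S := by positivity
  have hsqrt : r i + N ≤ √((r i + N) ^ 2 + 4 * N * S) :=
    Real.le_sqrt_of_sq_le (le_add_of_nonneg_right (by positivity))
  have hti : r i ≤ (r i - N + √((r i + N) ^ 2 + 4 * N * S)) / 2 := by linarith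
  set t := (r i - N + √((r i + N) ^ 2 + 4 * N * S)) / 2
  have hquad : t * (t - r i + N) = N * (r i + ∑ k, max (r k - r i) 0) :=
    hS ▸ half_add_sqrt_mul_eq hD
  have hrow := mulVec_le_of_offDiag_le hA hdiag hNpos.le
    (fun a b hab => hN.2 ⟨a, b, hab, rfl⟩) hr hquad
  exact specRad_le_of_mulVec_le_s4 hA (fun k => by linarith [hr0 k]) (by linarith [hr0 i]) hrow

theorem stmt_4 {n : ℕ} (A : Matrix (Fin n) (Fin n) ℝ)
    (hA : ∀ i j, 0 ≤ A i j) (hirr : Irred A) (hdiag : ∀ i, A i i = 0)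
    (r : Fin n → ℝ) (hr : ∀ i, r i = ∑ j, A i j)
    (N : ℝ) (hN : IsGreatest {x | ∃ i j, i ≠ j ∧ x = A i j} N)
    (hord : ∀ i j : Fin n, i ≤ j → r j ≤ r i) (hNpos : 0 < N) :
    ∀ i : Fin n, specRad A ≤
      (r i - N +
        Real.sqrt ((r i + N) ^ 2 + 4 * N * ∑ k ∈ Finset.Iio i, (r k - r i))) / 2 :=
  stmt_4_general A hA hdiag r hr N hN hord hNpos
end

section
/- Let G be a connected graph on n ≥ 2 vertices with transmissions 𝔻₁ ≥ 𝔻₂ ≥ ... ≥ 𝔻_n and diameter d. Then for each 1 ≤ i ≤ n, the distance spectral radius satisfies ρ(𝔻(G)) ≤ (𝔻_i − d + √((𝔻_i + d)² + 4d·Σ_{k=1}^{i−1}(𝔻_k − 𝔻_i)))/2, with equality if and only if 𝔻₁ = 𝔻₂ = ... = 𝔻_n. -/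
/-!
Put `m v = max (D v - D i) 0`, so that `∑ m = ∑_{k<i} (D k - D i) =: S`, and let `φ` be the bound,
the larger root of `(φ - D i) (φ + d) = d S`. Since the off-diagonal distances lie in `[1, d]`, the
positive vector `u = m + (φ + d)` satisfies `𝔻 u ≤ φ u`. Comparing the modulus `|v|` of any complex
eigenvector with the largest multiple of `u` below it (Collatz–Wielandt) bounds every eigenvalue
modulus by `φ`. If `ρ(𝔻) = φ`, the same comparison forces `𝔻 u = φ u`; the vanishing slack then
gives either `D ≡ D i`, or a vertex at distance `d` from all others, which has a neighbour, so
`d = 1` and `G` is complete.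
-/

open Matrix Finset Real

namespace Multiset

theorem foldr_max_zero_le_iff {s : Multiset ℝ} {b : ℝ} :
    s.foldr max 0 ≤ b ↔ 0 ≤ b ∧ ∀ x ∈ s, x ≤ b := by
  induction s using Multiset.induction_on with
  | empty => simp
  | cons a s ih => simp [ih, and_left_comm]

theorem foldr_max_zero_eq_zero_or_mem (s : Multiset ℝ) :
    s.foldr max 0 = 0 ∨ s.foldr max 0 ∈ s := by
  induction s using Multiset.induction_on with
  | empty => simp
  | cons a s ih =>
    rw [foldr_cons]
    rcases max_choice a (s.foldr max 0) with h | h <;> rw [h]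
    · exact .inr (mem_cons_self a s)
    · exact ih.imp_right (mem_cons_of_mem ·)

end Multiset

theorem Matrix.isRoot_charpoly_iff_exists_mulVec_eq_smul {K ι : Type*} [Field K] [Fintype ι]
    [DecidableEq ι] (M : Matrix ι ι K) (t : K) :
    M.charpoly.IsRoot t ↔ ∃ v ≠ 0, M *ᵥ v = t • v := by
  rw [← charpoly_toLin', ← Module.End.hasEigenvalue_iff_isRoot_charpoly]
  constructor
  · intro h
    obtain ⟨v, hv⟩ := h.exists_hasEigenvector
    exact ⟨v, hv.2, by simpa using hv.apply_eq_smul⟩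
  · rintro ⟨v, hv0, hv⟩
    exact Module.End.hasEigenvalue_of_hasEigenvector
      ⟨Module.End.mem_eigenspace_iff.mpr (by simpa using hv), hv0⟩

section CollatzWielandt

variable {ι : Type*} [Fintype ι] {A : Matrix ι ι ℝ} {u w : ι → ℝ} {φ : ℝ}

theorem Matrix.mulVec_le_mulVec_of_nonneg (hA : ∀ a b, 0 ≤ A a b) (h : w ≤ u) :
    A *ᵥ w ≤ A *ᵥ u := fun k =>
  Finset.sum_le_sum fun x _ => mul_le_mul_of_nonneg_left (h x) (hA k x)

theorem exists_le_smul_and_eq_mul (hu : ∀ k, 0 < u k) (hw : 0 ≤ w) (hw0 : w ≠ 0) :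
    ∃ t > 0, ∃ k, w ≤ t • u ∧ w k = t * u k := by
  obtain ⟨j, hj⟩ := Function.ne_iff.mp hw0
  obtain ⟨k, -, hk⟩ := Finset.exists_max_image univ (fun k => w k / u k) ⟨j, mem_univ j⟩
  refine ⟨w k / u k, ?_, k, fun x => ?_, (div_mul_cancel₀ _ (hu k).ne').symm⟩
  · exact (div_pos (lt_of_le_of_ne (hw j) (Ne.symm hj)) (hu j)).trans_le (hk j (mem_univ j))
  · simpa [div_le_iff₀ (hu x)] using hk x (mem_univ x)

theorem le_of_smul_le_mulVec (hA : ∀ a b, 0 ≤ A a b) (hu : ∀ k, 0 < u k)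
    (hAu : ∀ k, (A *ᵥ u) k ≤ φ * u k) (hw : 0 ≤ w) (hw0 : w ≠ 0) {r : ℝ}
    (hAw : ∀ k, r * w k ≤ (A *ᵥ w) k) : r ≤ φ := by
  obtain ⟨t, ht, k, hwu, hwk⟩ := exists_le_smul_and_eq_mul hu hw hw0
  have hwk_pos : 0 < w k := hwk ▸ mul_pos ht (hu k)
  refine le_of_mul_le_mul_right ?_ hwk_pos
  calc r * w k ≤ (A *ᵥ w) k := hAw k
    _ ≤ (A *ᵥ (t • u)) k := mulVec_le_mulVec_of_nonneg hA hwu k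
    _ = t * (A *ᵥ u) k := by rw [mulVec_smul, Pi.smul_apply, smul_eq_mul]
    _ ≤ t * (φ * u k) := mul_le_mul_of_nonneg_left (hAu k) ht.le
    _ = φ * w k := by rw [hwk]; ring

/-- At a coordinate `k` where `w k / u k` is maximal, `t • u - w ≥ 0` vanishes and
`A *ᵥ (t • u - w)` is `≤ 0`; as row `k` of `A` is positive off the diagonal, `w = t • u`. -/
theorem mulVec_eq_smul_of_smul_le_mulVec [DecidableEq ι] (hA : ∀ a b, 0 ≤ A a b)
    (hApos : ∀ a b, a ≠ b → 0 < A a b) (hu : ∀ k, 0 < u k)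
    (hAu : ∀ k, (A *ᵥ u) k ≤ φ * u k) (hw : 0 ≤ w) (hw0 : w ≠ 0)
    (hAw : ∀ k, φ * w k ≤ (A *ᵥ w) k) : A *ᵥ u = φ • u := by
  obtain ⟨t, ht, k, hwu, hwk⟩ := exists_le_smul_and_eq_mul hu hw hw0
  set y := t • u - w
  have hy : 0 ≤ y := sub_nonneg.mpr hwu
  have hAy : (A *ᵥ y) k ≤ 0 := by
    calc (A *ᵥ y) k = t * (A *ᵥ u) k - (A *ᵥ w) k := by
          simp only [y, mulVec_sub, mulVec_smul, Pi.sub_apply, Pi.smul_apply, smul_eq_mul]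
      _ ≤ t * (φ * u k) - φ * w k := by gcongr; exacts [hAu k, hAw k]
      _ = 0 := by rw [hwk]; ring
  have hterms := (Finset.sum_eq_zero_iff_of_nonneg fun x _ => mul_nonneg (hA k x) (hy x)).mp
    (le_antisymm hAy (Finset.sum_nonneg fun x _ => mul_nonneg (hA k x) (hy x)))
  have hy0 : y = 0 := by
    funext x
    rcases eq_or_ne k x with rfl | hkx
    · simp [y, hwk]
    · exact (mul_eq_zero.mp (hterms x (mem_univ x))).resolve_left (hApos k x hkx).ne'
  have hwt : w = t • u := (sub_eq_zero.mp hy0).symm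
  funext j
  refine le_antisymm (hAu j) (le_of_mul_le_mul_left ?_ ht)
  calc t * (φ • u) j = φ * w j := by simp [hwt]; ring
    _ ≤ (A *ᵥ w) j := hAw j
    _ = t * (A *ᵥ u) j := by rw [hwt, mulVec_smul, Pi.smul_apply, smul_eq_mul]

theorem norm_mul_le_mulVec_norm (hA : ∀ a b, 0 ≤ A a b) {ζ : ℂ} {v : ι → ℂ}
    (hv : A.map Complex.ofReal *ᵥ v = ζ • v) (k : ι) :
    ‖ζ‖ * ‖v k‖ ≤ (A *ᵥ fun j => ‖v j‖) k :=
  calc ‖ζ‖ * ‖v k‖ = ‖∑ j, (A k j : ℂ) * v j‖ := by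
        rw [← norm_mul, ← smul_eq_mul, ← Pi.smul_apply, ← hv]; rfl
    _ ≤ ∑ j, ‖(A k j : ℂ) * v j‖ := norm_sum_le _ _
    _ = (A *ᵥ fun j => ‖v j‖) k := by
        simp only [norm_mul, Complex.norm_real, Real.norm_of_nonneg (hA k _)]; rfl

end CollatzWielandt

section specRad

variable {n : ℕ} {A : Matrix (Fin n) (Fin n) ℝ} {u : Fin n → ℝ} {φ : ℝ}

theorem le_specRad_of_mulVec_eq_smul {r : ℝ} (hr : 0 ≤ r) {v : Fin n → ℝ} (hv : v ≠ 0)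
    (hAv : A *ᵥ v = r • v) : r ≤ specRad A := by
  have hroot : (A.map Complex.ofReal).charpoly.IsRoot (r : ℂ) := by
    have hreal : A.charpoly.IsRoot r :=
      (isRoot_charpoly_iff_exists_mulVec_eq_smul A r).mpr ⟨v, hv, hAv⟩
    change (A.map Complex.ofRealHom).charpoly.IsRoot (Complex.ofRealHom r)
    rw [charpoly_map]
    exact Polynomial.IsRoot.map hreal
  have hmem : ‖(r : ℂ)‖ ∈ ((A.map Complex.ofReal).charpoly.roots).map (‖·‖) :=
    Multiset.mem_map_of_mem _ ((Polynomial.mem_roots (charpoly_monic _).ne_zero).mpr hroot)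
  rw [Complex.norm_real, Real.norm_of_nonneg hr] at hmem
  exact (Multiset.foldr_max_zero_le_iff.mp le_rfl).2 _ hmem

theorem exists_mulVec_eq_smul_norm_eq_specRad (h : 0 < specRad A) :
    ∃ ζ : ℂ, ∃ v ≠ 0, A.map Complex.ofReal *ᵥ v = ζ • v ∧ ‖ζ‖ = specRad A := by
  rcases Multiset.foldr_max_zero_eq_zero_or_mem
    (((A.map Complex.ofReal).charpoly.roots).map (‖·‖)) with h0 | hmem
  · exact absurd h0 h.ne'
  obtain ⟨ζ, hζ, hnorm⟩ := Multiset.mem_map.mp hmem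
  obtain ⟨v, hv0, hv⟩ := (isRoot_charpoly_iff_exists_mulVec_eq_smul _ ζ).mp
    (Polynomial.isRoot_of_mem_roots hζ)
  exact ⟨ζ, v, hv0, hv, hnorm⟩

theorem specRad_le_of_mulVec_le_s12 (hA : ∀ a b, 0 ≤ A a b) (hu : ∀ k, 0 < u k)
    (hAu : ∀ k, (A *ᵥ u) k ≤ φ * u k) (hφ : 0 ≤ φ) : specRad A ≤ φ := by
  refine Multiset.foldr_max_zero_le_iff.mpr ⟨hφ, fun x hx => ?_⟩
  obtain ⟨ζ, hζ, rfl⟩ := Multiset.mem_map.mp hx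
  obtain ⟨v, hv0, hv⟩ := (isRoot_charpoly_iff_exists_mulVec_eq_smul _ ζ).mp
    (Polynomial.isRoot_of_mem_roots hζ)
  exact le_of_smul_le_mulVec hA hu hAu (fun j => norm_nonneg (v j))
    (by simpa [funext_iff] using hv0) (norm_mul_le_mulVec_norm hA hv)

theorem mulVec_eq_smul_of_specRad_eq (hA : ∀ a b, 0 ≤ A a b)
    (hApos : ∀ a b, a ≠ b → 0 < A a b) (hu : ∀ k, 0 < u k)
    (hAu : ∀ k, (A *ᵥ u) k ≤ φ * u k) (hφ : 0 < φ) (heq : specRad A = φ) :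
    A *ᵥ u = φ • u := by
  obtain ⟨ζ, v, hv0, hv, hζ⟩ := exists_mulVec_eq_smul_norm_eq_specRad (heq ▸ hφ)
  refine mulVec_eq_smul_of_smul_le_mulVec hA hApos hu hAu (fun j => norm_nonneg (v j))
    (by simpa [funext_iff] using hv0) fun k => ?_
  rw [← heq, ← hζ]
  exact norm_mul_le_mulVec_norm hA hv k

end specRad

section TestVector

variable {ι : Type*} [Fintype ι] [DecidableEq ι] {A : Matrix ι ι ℝ} {D : ι → ℝ} {d r φ : ℝ}

theorem mul_sub_mulVec_add_const_eq (hdiag : ∀ a, A a a = 0) (hD : ∀ v, ∑ x, A v x = D v)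
    (m : ι → ℝ) (hφ : φ * (φ + d) = r * (φ + d) + d * ∑ x, m x) (v : ι) :
    φ * (m v + (φ + d)) - (A *ᵥ fun x => m x + (φ + d)) v =
      ∑ x ∈ univ.erase v, (d - A v x) * m x + (φ + d) * (r + m v - D v) := by
  have hAm : ∑ x ∈ univ.erase v, A v x * m x = ∑ x, A v x * m x :=
    Finset.sum_erase _ (by rw [hdiag v, zero_mul])
  have hmv : ∑ x ∈ univ.erase v, m x = ∑ x, m x - m v :=
    Finset.sum_erase_eq_sub (mem_univ v)
  have hAu : (A *ᵥ fun x => m x + (φ + d)) v = ∑ x, A v x * m x + (φ + d) * D v := by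
    simp only [mulVec, dotProduct, mul_add, Finset.sum_add_distrib, ← Finset.sum_mul, hD]
    ring
  simp only [sub_mul, Finset.sum_sub_distrib, ← Finset.mul_sum, hAm, hmv, hAu]
  linear_combination hφ

theorem mulVec_posPart_add_const_le (hdiag : ∀ a, A a a = 0) (hle : ∀ a b, A a b ≤ d)
    (hD : ∀ v, ∑ x, A v x = D v) (hc : 0 ≤ φ + d)
    (hφ : φ * (φ + d) = r * (φ + d) + d * ∑ x, max (D x - r) 0) (v : ι) :
    (A *ᵥ fun x => max (D x - r) 0 + (φ + d)) v ≤ φ * (max (D v - r) 0 + (φ + d)) := by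
  have hslack := mul_sub_mulVec_add_const_eq hdiag hD _ hφ v
  have h1 : 0 ≤ ∑ x ∈ univ.erase v, (d - A v x) * max (D x - r) 0 :=
    Finset.sum_nonneg fun x _ => mul_nonneg (sub_nonneg.mpr (hle v x)) (le_max_right _ _)
  have h2 : 0 ≤ (φ + d) * (r + max (D v - r) 0 - D v) :=
    mul_nonneg hc (by linarith [le_max_left (D v - r) 0])
  linarith

theorem sum_row_eq_of_offDiag_eq_one (hdiag : ∀ a, A a a = 0)
    (hone : ∀ a b, a ≠ b → A a b = 1) (v : ι) : ∑ x, A v x = (Fintype.card ι - 1 : ℕ) := by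
  rw [← Finset.sum_erase _ (hdiag v), Finset.sum_congr rfl fun x hx =>
    hone v x (Finset.ne_of_mem_erase hx).symm]
  simp [Finset.card_erase_of_mem (mem_univ v)]

/-- All slack in `mul_sub_mulVec_add_const_eq` vanishes, so either `D ≡ r`, or some column
of `A` is constantly `d` off the diagonal; its entry `1` then forces `d = 1`, and all row sums
are `card ι - 1`. -/
theorem eq_of_mulVec_posPart_add_const_eq (hdiag : ∀ a, A a a = 0)
    (hoff : ∀ a b, a ≠ b → 1 ≤ A a b) (hle : ∀ a b, A a b ≤ d)
    (hnbr : ∀ a, ∃ b ≠ a, A b a = 1) (hD : ∀ v, ∑ x, A v x = D v) (hc : 0 < φ + d)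
    (hφ : φ * (φ + d) = r * (φ + d) + d * ∑ x, max (D x - r) 0)
    (heq : (A *ᵥ fun x => max (D x - r) 0 + (φ + d)) = φ • fun x => max (D x - r) 0 + (φ + d))
    (j k : ι) : D j = D k := by
  set m : ι → ℝ := fun x => max (D x - r) 0
  have hslack (v : ι) :
      ∑ x ∈ univ.erase v, (d - A v x) * m x + (φ + d) * (r + m v - D v) = 0 := by
    rw [← mul_sub_mulVec_add_const_eq hdiag hD m hφ v, heq]
    simp [m]
  have hterm (v x : ι) : 0 ≤ (d - A v x) * m x :=
    mul_nonneg (sub_nonneg.mpr (hle v x)) (le_max_right _ _)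
  have hrow_slack (v : ι) : 0 ≤ r + m v - D v := by linarith [le_max_left (D v - r) 0]
  have hsum (v : ι) := (add_eq_zero_iff_of_nonneg (Finset.sum_nonneg fun x _ => hterm v x)
    (mul_nonneg hc.le (hrow_slack v))).mp (hslack v)
  by_cases hm : ∀ x, m x = 0
  · have hDr (v : ι) : D v = r := by
      have := (mul_eq_zero.mp (hsum v).2).resolve_left hc.ne'
      linarith [hm v, le_max_left (D v - r) 0]
    rw [hDr j, hDr k]
  · obtain ⟨x, hx⟩ := not_forall.mp hm
    obtain ⟨y, hyx, hAyx⟩ := hnbr x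
    have hd : d = 1 := by
      have := (Finset.sum_eq_zero_iff_of_nonneg fun x _ => hterm y x).mp (hsum y).1 x
        (Finset.mem_erase.mpr ⟨hyx.symm, mem_univ x⟩)
      rw [hAyx] at this
      linarith [(mul_eq_zero.mp this).resolve_right hx]
    have hone (a b : ι) (hab : a ≠ b) : A a b = 1 := le_antisymm (hd ▸ hle a b) (hoff a b hab)
    rw [← hD, ← hD, sum_row_eq_of_offDiag_eq_one hdiag hone,
      sum_row_eq_of_offDiag_eq_one hdiag hone]

end TestVector

theorem half_sub_add_sqrt_mul_eq {a b s φ : ℝ} (h : 0 ≤ (a + b) ^ 2 + 4 * b * s)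
    (hφ : φ = (a - b + √((a + b) ^ 2 + 4 * b * s)) / 2) :
    φ * (φ + b) = a * (φ + b) + b * s := by
  subst hφ
  linear_combination Real.sq_sqrt h / 4

theorem le_half_sub_add_sqrt {a b s : ℝ} (hbs : 0 ≤ b * s) :
    a ≤ (a - b + √((a + b) ^ 2 + 4 * b * s)) / 2 := by
  have : a + b ≤ √((a + b) ^ 2 + 4 * b * s) := Real.le_sqrt_of_sq_le (by linarith)
  linarith

theorem Antitone.sum_Iio_sub_eq_sum_max {ι : Type*} [Fintype ι] [LinearOrder ι]
    [LocallyFiniteOrderBot ι] {D : ι → ℝ} (hD : Antitone D) (i : ι) :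
    ∑ k ∈ Iio i, (D k - D i) = ∑ k, max (D k - D i) 0 := by
  rw [← Finset.sum_subset (subset_univ (Iio i)) fun k _ hk =>
    max_eq_right (sub_nonpos.mpr (hD (not_lt.mp (mt Finset.mem_Iio.mpr hk))))]
  exact Finset.sum_congr rfl fun k hk =>
    (max_eq_left (sub_nonneg.mpr (hD (Finset.mem_Iio.mp hk).le))).symm

namespace SimpleGraph

variable {V : Type*} {G : SimpleGraph V}

theorem Connected.exists_dist_eq_one [Nontrivial V] (hG : G.Connected) (a : V) :
    ∃ b ≠ a, G.dist b a = 1 := by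
  obtain ⟨b, hab⟩ := hG.preconnected.exists_adj_of_nontrivial a
  exact ⟨b, hab.ne.symm, dist_eq_one_iff_adj.mpr hab.symm⟩

end SimpleGraph

theorem specRad_le_half_sub_add_sqrt {n : ℕ} {A : Matrix (Fin n) (Fin n) ℝ} {D : Fin n → ℝ}
    {d : ℝ} (hdiag : ∀ a, A a a = 0) (hoff : ∀ a b, a ≠ b → 1 ≤ A a b) (hle : ∀ a b, A a b ≤ d)
    (hnbr : ∀ a, ∃ b ≠ a, A b a = 1) (hrow : ∀ v, ∑ x, A v x = D v) (i : Fin n) :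
    specRad A ≤ (D i - d + √((D i + d) ^ 2 + 4 * d * ∑ k, max (D k - D i) 0)) / 2 ∧
      (specRad A = (D i - d + √((D i + d) ^ 2 + 4 * d * ∑ k, max (D k - D i) 0)) / 2 ↔
        ∀ j k, D j = D k) := by
  have hA0 (a b : Fin n) : 0 ≤ A a b := by
    rcases eq_or_ne a b with rfl | hab
    exacts [(hdiag a).ge, zero_le_one.trans (hoff a b hab)]
  obtain ⟨j₀, hj₀, -⟩ := hnbr i
  have hd1 : 1 ≤ d := (hoff i j₀ hj₀.symm).trans (hle i j₀)
  have hDi : 1 ≤ D i := (hoff i j₀ hj₀.symm).trans <|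
    hrow i ▸ Finset.single_le_sum (fun x _ => hA0 i x) (mem_univ j₀)
  set S := ∑ k, max (D k - D i) 0
  have hS0 : 0 ≤ S := Finset.sum_nonneg fun k _ => le_max_right _ _
  set φ := (D i - d + √((D i + d) ^ 2 + 4 * d * S)) / 2 with hφdef
  have hφ : φ * (φ + d) = D i * (φ + d) + d * S := half_sub_add_sqrt_mul_eq (by positivity) hφdef
  have hDφ : D i ≤ φ := le_half_sub_add_sqrt (by positivity)
  have hc : 0 < φ + d := by linarith
  have hu (k : Fin n) : 0 < max (D k - D i) 0 + (φ + d) := by positivity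
  have hAu := mulVec_posPart_add_const_le hdiag hle hrow hc.le hφ
  have hbound : specRad A ≤ φ := specRad_le_of_mulVec_le_s12 hA0 hu hAu (by linarith)
  refine ⟨hbound, fun heq => ?_, fun hall => le_antisymm hbound ?_⟩
  · have hApos (a b : Fin n) (hab : a ≠ b) : 0 < A a b := one_pos.trans_le (hoff a b hab)
    exact eq_of_mulVec_posPart_add_const_eq hdiag hoff hle hnbr hrow hc hφ
      (mulVec_eq_smul_of_specRad_eq hA0 hApos hu hAu (by linarith) heq)
  · have hφD : φ = D i := by
      have hS : S = 0 := Finset.sum_eq_zero fun k _ => by simp [hall k i]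
      rw [hφdef, hS, mul_zero, add_zero, Real.sqrt_sq (by linarith)]
      ring
    have : Nonempty (Fin n) := ⟨i⟩
    refine hφD ▸ le_specRad_of_mulVec_eq_smul (by linarith) one_ne_zero ?_
    funext v
    simp [mulVec, dotProduct, hrow, hall v i]

theorem stmt_12 {n : ℕ} (hn : 2 ≤ n) (G : SimpleGraph (Fin n)) (hconn : G.Connected)
    (D : Fin n → ℝ) (hD : ∀ i, D i = ∑ j, (G.dist i j : ℝ))
    (hord : ∀ i j : Fin n, i ≤ j → D j ≤ D i)
    (d : ℕ) (hd : IsGreatest {k | ∃ i j : Fin n, k = G.dist i j} d) :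
    ∀ i : Fin n,
      specRad (Matrix.of fun i j : Fin n => (G.dist i j : ℝ)) ≤
        (D i - (d : ℝ) +
          Real.sqrt ((D i + (d : ℝ)) ^ 2 +
            4 * (d : ℝ) * ∑ k ∈ Finset.Iio i, (D k - D i))) / 2 ∧
      (specRad (Matrix.of fun i j : Fin n => (G.dist i j : ℝ)) =
        (D i - (d : ℝ) +
          Real.sqrt ((D i + (d : ℝ)) ^ 2 +
            4 * (d : ℝ) * ∑ k ∈ Finset.Iio i, (D k - D i))) / 2 ↔
        ∀ j k : Fin n, D j = D k) := by
  intro i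
  have : Nontrivial (Fin n) := Fin.nontrivial_iff_two_le.mpr hn
  rw [Antitone.sum_Iio_sub_eq_sum_max (fun a b hab => hord a b hab)]
  refine specRad_le_half_sub_add_sqrt (by simp) (fun a b hab => ?_) (fun a b => ?_) (fun a => ?_)
    (fun v => (hD v).symm) i
  · simpa [Nat.one_le_iff_ne_zero] using (hconn.pos_dist_of_ne hab).ne'
  · exact Nat.cast_le.mpr (hd.2 ⟨a, b, rfl⟩)
  · obtain ⟨b, hba, hdist⟩ := hconn.exists_dist_eq_one a
    exact ⟨b, hba, by simp [hdist]⟩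
end

section
/- Let G be a connected graph on n ≥ 2 vertices with transmissions 𝔻₁ ≥ 𝔻₂ ≥ ... ≥ 𝔻_n. Then ρ(𝔻(G)) ≥ (𝔻_n − 1 + √((𝔻_n + 1)² + 4·Σ_{k=1}^{n−1}(𝔻_k − 𝔻_n)))/2. -/
/-!
The Rayleigh quotient of the all-ones vector gives `ρ ≥ (∑ᵢ 𝔻ᵢ) / n = 𝔻ₙ + S / n`, where
`S = ∑_{k<n} (𝔻ₖ - 𝔻ₙ) ≥ 0`. Every vertex is at distance at least `1` from the `n - 1` others,
so `n ≤ 𝔻ₙ + 1`, and then `√((𝔻ₙ + 1)² + 4S) ≤ 𝔻ₙ + 1 + 2S / n`: the stated bound is at most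
`𝔻ₙ + S / n`.
-/

open Matrix Finset Real

open scoped RealInnerProductSpace

theorem LinearMap.IsSymmetric.inner_map_self_le {ι E : Type*} [Fintype ι]
    [NormedAddCommGroup E] [InnerProductSpace ℝ E] {T : E →ₗ[ℝ] E} (hT : T.IsSymmetric)
    (b : OrthonormalBasis ι ℝ E) {μ : ι → ℝ} (hb : ∀ i, T (b i) = μ i • b i) {c : ℝ}
    (hc : ∀ i, μ i ≤ c) (x : E) : ⟪x, T x⟫ ≤ c * ⟪x, x⟫ := by
  calc ⟪x, T x⟫ = ∑ i, μ i * ⟪b i, x⟫ ^ 2 := by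
        rw [← b.sum_inner_mul_inner]
        refine sum_congr rfl fun i _ => ?_
        rw [← hT, hb, real_inner_smul_left, real_inner_comm]
        ring
    _ ≤ ∑ i, c * ⟪b i, x⟫ ^ 2 := by gcongr with i; exact hc i
    _ = c * ⟪x, x⟫ := by rw [← mul_sum, b.sum_sq_inner_right, real_inner_self_eq_norm_sq]

theorem Matrix.IsHermitian.dotProduct_mulVec_le {ι : Type*} [Fintype ι] [DecidableEq ι]
    {A : Matrix ι ι ℝ} (hA : A.IsHermitian) {c : ℝ} (hc : ∀ i, hA.eigenvalues i ≤ c)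
    (x : ι → ℝ) : x ⬝ᵥ (A *ᵥ x) ≤ c * (x ⬝ᵥ x) := by
  have := (isSymmetric_toEuclideanLin_iff.mpr hA).inner_map_self_le hA.eigenvectorBasis
    (fun i => ?_) hc (WithLp.toLp 2 x)
  · simpa only [EuclideanSpace.inner_eq_star_dotProduct, toLpLin_apply, star_trivial,
      dotProduct_comm x] using this
  · simpa [toLpLin_apply] using congrArg (WithLp.toLp 2) (hA.mulVec_eigenvectorBasis i)

theorem Multiset.le_foldr_max_of_mem {α : Type*} [LinearOrder α] {m : Multiset α} {a : α}
    (b : α) (h : a ∈ m) : a ≤ m.foldr max b := by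
  induction m using Multiset.induction with
  | empty => simp at h
  | cons c s ih =>
    rw [Multiset.foldr_cons]
    rcases Multiset.mem_cons.mp h with rfl | h
    · exact le_max_left _ _
    · exact (ih h).trans (le_max_right _ _)

theorem abs_le_specRad_of_isRoot_charpoly {n : ℕ} (A : Matrix (Fin n) (Fin n) ℝ) {μ : ℝ}
    (hμ : A.charpoly.IsRoot μ) : |μ| ≤ specRad A := by
  have hroot : (μ : ℂ) ∈ (A.map Complex.ofReal).charpoly.roots := by
    rw [show A.map Complex.ofReal = A.map (algebraMap ℝ ℂ) from rfl, charpoly_map,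
      Polynomial.mem_roots ((A.charpoly_monic.map _).ne_zero)]
    exact hμ.map
  calc |μ| = ‖(μ : ℂ)‖ := by simp
    _ ≤ specRad A := Multiset.le_foldr_max_of_mem 0 (Multiset.mem_map_of_mem (‖·‖) hroot)

theorem Matrix.IsHermitian.eigenvalues_le_specRad {n : ℕ} {A : Matrix (Fin n) (Fin n) ℝ}
    (hA : A.IsHermitian) (i : Fin n) : hA.eigenvalues i ≤ specRad A :=
  (le_abs_self _).trans <| abs_le_specRad_of_isRoot_charpoly A <|
    mem_spectrum_iff_isRoot_charpoly.mp (hA.eigenvalues_mem_spectrum_real i)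

theorem Matrix.IsHermitian.sum_entries_le_card_mul_specRad {n : ℕ}
    {A : Matrix (Fin n) (Fin n) ℝ} (hA : A.IsHermitian) : ∑ i, ∑ j, A i j ≤ n * specRad A := by
  simpa [dotProduct, mulVec, mul_comm] using
    hA.dotProduct_mulVec_le hA.eigenvalues_le_specRad (fun _ => 1)

theorem SimpleGraph.Connected.card_le_sum_dist_add_one {V : Type*} [Fintype V] [DecidableEq V]
    {G : SimpleGraph V} (hG : G.Connected) (i : V) : Fintype.card V ≤ ∑ j, G.dist i j + 1 := by
  calc Fintype.card V = #(univ.erase i) + 1 := by rw [card_erase_add_one (mem_univ i), card_univ]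
    _ = ∑ j ∈ univ.erase i, 1 + 1 := by rw [card_eq_sum_ones]
    _ ≤ ∑ j ∈ univ.erase i, G.dist i j + 1 := by
        gcongr with j hj
        exact hG.pos_dist_of_ne (ne_of_mem_erase hj).symm
    _ ≤ ∑ j, G.dist i j + 1 := by gcongr; exact erase_subset _ _

theorem Finset.sum_eq_card_nsmul_add_sum_erase_sub {ι M : Type*} [DecidableEq ι]
    [AddCommGroup M] (s : Finset ι) (a : ι) (f : ι → M) :
    ∑ i ∈ s, f i = #s • f a + ∑ i ∈ s.erase a, (f i - f a) := by
  rw [sum_erase _ (sub_self _), sum_sub_distrib, sum_const, add_sub_cancel]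

theorem half_sub_one_add_sqrt_le {n d S : ℝ} (hn : 0 < n) (hS : 0 ≤ S) (hd : n ≤ d + 1) :
    (d - 1 + √((d + 1) ^ 2 + 4 * S)) / 2 ≤ d + S / n := by
  set e := S / n
  have he : 0 ≤ e := div_nonneg hS hn.le
  have hSe : S = e * n := (div_mul_cancel₀ S hn.ne').symm
  have hsqrt : √((d + 1) ^ 2 + 4 * S) ≤ d + 1 + 2 * e := by
    rw [Real.sqrt_le_iff]
    constructor
    · linarith
    · nlinarith [mul_le_mul_of_nonneg_left hd he]
  linarith

theorem stmt_13 {n : ℕ} (hn : 2 ≤ n) (G : SimpleGraph (Fin n)) (hconn : G.Connected)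
    (D : Fin n → ℝ) (hD : ∀ i, D i = ∑ j, (G.dist i j : ℝ))
    (hord : ∀ i j : Fin n, i ≤ j → D j ≤ D i) :
    specRad (Matrix.of fun i j : Fin n => (G.dist i j : ℝ)) ≥
      (D ⟨n - 1, by omega⟩ - 1 +
        Real.sqrt ((D ⟨n - 1, by omega⟩ + 1) ^ 2 +
          4 * ∑ k ∈ Finset.Iio (⟨n - 1, by omega⟩ : Fin n),
            (D k - D ⟨n - 1, by omega⟩))) / 2 := by
  set A := Matrix.of fun i j : Fin n => (G.dist i j : ℝ)
  set L : Fin n := ⟨n - 1, by omega⟩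
  set S := ∑ k ∈ Iio L, (D k - D L)
  have hnpos : (0 : ℝ) < n := Nat.cast_pos.2 (by omega)
  have hIio : Iio L = univ.erase L := by
    ext k
    simp only [mem_Iio, mem_erase, mem_univ, and_true, Fin.lt_def, ne_eq, Fin.ext_iff, L]
    omega
  have hS : 0 ≤ S :=
    sum_nonneg fun k _ => sub_nonneg.2 (hord k L (Fin.le_def.2 (by simp [L]; omega)))
  have hDL : (n : ℝ) ≤ D L + 1 := by
    rw [hD]
    exact_mod_cast (Fintype.card_fin n).symm.trans_le (hconn.card_le_sum_dist_add_one L)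
  have hsym : A.IsHermitian := by
    ext i j
    simp [A, G.dist_comm]
  have hsum : n * D L + S ≤ n * specRad A := by
    have := hsym.sum_entries_le_card_mul_specRad
    simp only [A, of_apply, ← hD] at this
    rwa [sum_eq_card_nsmul_add_sum_erase_sub univ L, ← hIio, card_univ, Fintype.card_fin,
      nsmul_eq_mul] at this
  rw [ge_iff_le]
  calc _ ≤ D L + S / n := half_sub_one_add_sqrt_le hnpos hS hDL
    _ ≤ _ := by
      rw [← mul_le_mul_iff_of_pos_left hnpos, mul_add, mul_div_cancel₀ _ hnpos.ne']
      exact hsum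
end
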